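/- Let n be even and let γ : 𝕋 → ℂ be the step function which on each arc of points closest to the n-th root of unity ω^l takes the value ω^l. Then for every integer k with |k| < n, γ^k has the Fourier expansion γ^k = Σ_{j ∈ ℤ} sinc(π(k+jn)/n) z^{k+jn} in L²(𝕋). Consequently, convolving with the Fejér kernel F_{n/2} gives F_{n/2} * γ^k = (1 - 2|k|/n) sinc(πk/n) z^k for all |k| ≤ n/2. -/

import Mathlib

/-!
On the arc of length `1 / n` centred at `i / n` the function `γ ^ k` is the constant `ω ^ (i k)`,
and integrating `z ^ (-m)` over that arc gives `ω ^ (-i m) sinc (π m / n) / n`. Summing over the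
`n` arcs, the roots of unity `ω ^ (i (k - m))` add up to `n` or `0` according as `n ∣ m - k`.
When `|k| ≤ n / 2`, every other frequency `m ≡ k (mod n)` has `|m| ≥ n / 2`, where the Fejér
coefficient `max (0, 1 - |m| / (n / 2))` vanishes.
-/

open MeasureTheory

/-- `sinc x = sin x / x`, `sinc 0 = 1`. -/
noncomputable def sinc (x : ℝ) : ℝ := if x = 0 then 1 else Real.sin x / x

/-- The step function `γ : 𝕋 → ℂ` taking on each arc the value of the nearest `n`-th root
of unity `ω^l = e^{2πil/n}` (𝕋 = ℝ/ℤ, representative in `[0,1)`, ties by `round`). -/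
noncomputable def stepRoot (n : ℕ) (x : AddCircle (1 : ℝ)) : ℂ :=
  fourier 1 ((((round ((n : ℝ) * ((AddCircle.equivIco 1 0 x : ℝ)))) : ℝ) / n : ℝ) :
    AddCircle (1 : ℝ))

open Complex
open scoped Real

lemma sinc_eq_real_sinc : sinc = Real.sinc := rfl

lemma integral_cexp_mul_I_symm (a h : ℝ) :
    ∫ t in -h..h, cexp (↑(a * t) * I) = 2 * h * Real.sinc (a * h) := by
  rcases eq_or_ne a 0 with rfl | ha
  · simp [two_mul]
  rw [intervalIntegral.integral_comp_mul_left (fun t : ℝ => cexp (t * I)) ha, mul_neg,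
    integral_exp_mul_I_eq_sinc, real_smul]
  have ha' : (a : ℂ) ≠ 0 := by exact_mod_cast ha
  push_cast
  field_simp

lemma integral_cexp_mul_I_centered (a c h : ℝ) :
    ∫ t in c - h..c + h, cexp (↑(a * t) * I) =
      2 * h * Real.sinc (a * h) * cexp (↑(a * c) * I) := by
  have hshift (t : ℝ) :
      cexp (↑(a * (t + c)) * I) = cexp (↑(a * t) * I) * cexp (↑(a * c) * I) := by
    rw [← exp_add]; push_cast; ring_nf
  rw [sub_eq_neg_add, add_comm c, ← intervalIntegral.integral_comp_add_right]
  simp only [hshift, intervalIntegral.integral_mul_const, integral_cexp_mul_I_symm]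

lemma sum_cexp_two_pi_I_mul_div {n : ℕ} (hn : n ≠ 0) (j : ℤ) :
    ∑ i ∈ Finset.range n, cexp (2 * π * I * j * i / n) = if (n : ℤ) ∣ j then (n : ℂ) else 0 := by
  set r := cexp (2 * π * I * j / n)
  have hpow (i : ℕ) : cexp (2 * π * I * j * i / n) = r ^ i := by
    rw [← exp_nat_mul]; ring_nf
  simp only [hpow]
  have hr : r = 1 ↔ (n : ℤ) ∣ j := by
    rw [exp_eq_one_iff]
    constructor
    · rintro ⟨l, hl⟩
      field_simp at hl
      exact ⟨l, by exact_mod_cast hl⟩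
    · rintro ⟨l, rfl⟩
      exact ⟨l, by push_cast; field_simp⟩
  split_ifs with hj
  · simp [hr.2 hj]
  · have hrn : r ^ n = 1 := by
      rw [← exp_nat_mul, exp_eq_one_iff]; exact ⟨j, by field_simp⟩
    rw [geom_sum_eq (mt hr.1 hj), hrn, sub_self, zero_div]

lemma measurable_round {R : Type*} [Field R] [LinearOrder R] [IsStrictOrderedRing R] [FloorRing R]
    [TopologicalSpace R] [OrderTopology R] [MeasurableSpace R] [OpensMeasurableSpace R]
    [MeasurableAdd R] : Measurable (round : R → ℤ) := by
  rw [show (round : R → ℤ) = fun x => ⌊x + 1 / 2⌋ from funext round_eq]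
  exact Int.measurable_floor.comp (measurable_add_const _)

noncomputable def fejerCoeff (N : ℝ) (k : ℤ) : ℝ := max 0 (1 - |(k : ℝ)| / N)

lemma fejerCoeff_of_abs_le {N : ℝ} {k : ℤ} (hk : |(k : ℝ)| ≤ N) :
    fejerCoeff N k = 1 - |(k : ℝ)| / N :=
  max_eq_right (sub_nonneg.mpr (div_le_one_of_le₀ hk ((abs_nonneg _).trans hk)))

lemma fejerCoeff_eq_zero {N : ℝ} {k : ℤ} (hN : 0 < N) (hk : N ≤ |(k : ℝ)|) : fejerCoeff N k = 0 :=
  max_eq_left (sub_nonpos.mpr ((one_le_div hN).mpr hk))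

lemma half_le_abs_of_dvd_sub {n : ℕ} {k m : ℤ} (hk : |k| ≤ (n : ℤ) / 2) (hmk : m ≠ k)
    (hdvd : (n : ℤ) ∣ m - k) : (n : ℝ) / 2 ≤ |(m : ℝ)| := by
  have hnm : (n : ℤ) ≤ |m - k| :=
    Int.le_of_dvd (abs_pos.mpr (sub_ne_zero.mpr hmk)) ((dvd_abs _ _).mpr hdvd)
  have htri := abs_sub m k
  have hm : (n : ℝ) ≤ 2 * |(m : ℝ)| := by
    rw [← Int.cast_abs]
    exact_mod_cast (by omega : (n : ℤ) ≤ 2 * |m|)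
  linarith

lemma measurable_stepRoot (n : ℕ) : Measurable (stepRoot n) :=
  (map_continuous (fourier 1)).measurable.comp <| AddCircle.measurable_mk'.comp <|
    (measurable_from_top.comp <| measurable_round.comp <| measurable_const.mul <|
      measurable_subtype_coe.comp (AddCircle.measurableEquivIco (1 : ℝ) 0).measurable).div_const _

lemma norm_stepRoot (n : ℕ) (x : AddCircle (1 : ℝ)) : ‖stepRoot n x‖ = 1 := by
  rw [stepRoot, fourier_apply]
  exact Circle.norm_coe _

lemma stepRoot_coe {n : ℕ} (hn : n ≠ 0) (x : ℝ) :
    stepRoot n x = cexp (2 * π * I * round (n * x) / n) := by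
  have hfract :
      n * (AddCircle.equivIco 1 0 (x : AddCircle (1 : ℝ)) : ℝ) = n * x - (n * ⌊x⌋ : ℤ) := by
    rw [AddCircle.coe_equivIco_mk_apply, div_one, mul_one, Int.fract]
    push_cast
    ring
  rw [stepRoot, fourier_coe_apply, hfract, round_sub_intCast, exp_eq_exp_iff_exists_int]
  refine ⟨-⌊x⌋, ?_⟩
  push_cast
  field_simp
  ring

lemma integral_fourier_smul_stepRoot_zpow_arc {n : ℕ} (hn : n ≠ 0) (k m : ℤ) (i : ℕ) :
    ∫ x in (i - 1 / 2) / n..(i + 1 / 2) / n,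
        fourier (-m) (x : AddCircle (1 : ℝ)) • stepRoot n x ^ k =
      Real.sinc (π * m / n) / n * cexp (2 * π * I * (k - m) * i / n) := by
  have hn' : (0 : ℝ) < n := by positivity
  have hstep : ∀ x ∈ Set.Ico ((i - 1 / 2) / n : ℝ) ((i + 1 / 2) / n),
      stepRoot n x ^ k = cexp (2 * π * I * k * i / n) := by
    intro x hx
    have hround : round (n * x) = i := by
      rw [round_eq_iff, Set.mem_Ico, ← div_le_iff₀' hn', ← lt_div_iff₀' hn']
      exact_mod_cast hx
    rw [stepRoot_coe hn, hround, ← exp_int_mul]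
    push_cast
    ring_nf
  have hfourier (x : ℝ) :
      fourier (-m) (x : AddCircle (1 : ℝ)) = cexp (↑(-2 * π * m * x) * I) := by
    rw [fourier_coe_apply]
    push_cast
    ring_nf
  have hab : ((i - 1 / 2) / n : ℝ) ≤ (i + 1 / 2) / n := by gcongr; linarith
  have hconst : ∫ x in (i - 1 / 2) / n..(i + 1 / 2) / n,
      fourier (-m) (x : AddCircle (1 : ℝ)) • stepRoot n x ^ k =
      ∫ x in (i - 1 / 2) / n..(i + 1 / 2) / n,
        cexp (2 * π * I * k * i / n) * cexp (↑(-2 * π * m * x) * I) := by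
    rw [intervalIntegral.integral_of_le hab, intervalIntegral.integral_of_le hab,
      ← integral_Ico_eq_integral_Ioc, ← integral_Ico_eq_integral_Ioc]
    refine setIntegral_congr_fun measurableSet_Ico fun x hx => ?_
    rw [smul_eq_mul, hstep x hx, hfourier, mul_comm]
  have hcenter : ((i - 1 / 2) / n : ℝ) = i / n - 1 / (2 * n) ∧
      ((i + 1 / 2) / n : ℝ) = i / n + 1 / (2 * n) := by
    constructor <;> field_simp
  have hphase : cexp (2 * π * I * k * i / n) * cexp (↑(-2 * π * m * (i / n)) * I) =
      cexp (2 * π * I * (k - m) * i / n) := by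
    rw [← exp_add]; push_cast; ring_nf
  rw [hconst, intervalIntegral.integral_const_mul, hcenter.1, hcenter.2,
    integral_cexp_mul_I_centered, show -2 * π * m * (1 / (2 * n)) = -(π * m / n) by ring,
    Real.sinc_neg, ← hphase]
  push_cast
  field_simp

lemma intervalIntegrable_fourier_smul_stepRoot_zpow (n : ℕ) (k m : ℤ) (a b : ℝ) :
    IntervalIntegrable (fun x : ℝ => fourier (-m) (x : AddCircle (1 : ℝ)) • stepRoot n x ^ k)
      volume a b := by
  refine IntervalIntegrable.mono_fun' (g := fun _ => (1 : ℝ)) intervalIntegrable_const ?_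
    (Filter.Eventually.of_forall fun x => ?_)
  · have := measurable_stepRoot n
    fun_prop
  · dsimp only
    rw [norm_smul, norm_zpow, norm_stepRoot, one_zpow, mul_one, fourier_apply]
    exact (Circle.norm_coe _).le

lemma fourierCoeff_stepRoot_zpow {n : ℕ} (hn : n ≠ 0) (k m : ℤ) :
    fourierCoeff (fun x : AddCircle (1 : ℝ) => stepRoot n x ^ k) m =
      if (n : ℤ) ∣ (m - k) then (Real.sinc (π * m / n) : ℂ) else 0 := by
  set a : ℕ → ℝ := fun i => (i - 1 / 2) / n
  have ha : a 0 + 1 = a n := by simp only [a]; field_simp; ring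
  have hpieces := intervalIntegral.sum_integral_adjacent_intervals (a := a) (n := n)
    (fun i _ => intervalIntegrable_fourier_smul_stepRoot_zpow n k m _ _)
  have hpiece (i : ℕ) :
      ∫ x in a i..a (i + 1), fourier (-m) (x : AddCircle (1 : ℝ)) • stepRoot n x ^ k =
        Real.sinc (π * m / n) / n * cexp (2 * π * I * (k - m : ℤ) * i / n) := by
    rw [show a (i + 1) = (i + 1 / 2) / n by simp only [a]; push_cast; ring]
    push_cast
    exact integral_fourier_smul_stepRoot_zpow_arc hn k m i
  rw [fourierCoeff_eq_intervalIntegral _ _ (a 0), ha, ← hpieces,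
    Finset.sum_congr rfl fun i _ => hpiece i, ← Finset.mul_sum, sum_cexp_two_pi_I_mul_div hn]
  simp only [dvd_sub_comm (b := k), div_one, one_smul]
  split_ifs
  · field_simp
  · rw [mul_zero]

theorem stepRoot_pow_fourierCoeff_general (n : ℕ) (hn1 : 1 ≤ n) :
    (∀ k : ℤ, |k| < (n : ℤ) → ∀ m : ℤ,
      fourierCoeff (fun x : AddCircle (1 : ℝ) => stepRoot n x ^ k) m =
        if (n : ℤ) ∣ (m - k) then (sinc (Real.pi * m / n) : ℂ) else 0) ∧
    (∀ k : ℤ, |k| ≤ (n : ℤ) / 2 → ∀ m : ℤ,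
      ((max 0 (1 - |(m : ℝ)| / ((n : ℝ) / 2)) : ℝ) : ℂ) *
          fourierCoeff (fun x : AddCircle (1 : ℝ) => stepRoot n x ^ k) m =
        if m = k then ((1 - 2 * |(k : ℝ)| / n) * sinc (Real.pi * k / n) : ℂ) else 0) := by
  have hn : n ≠ 0 := Nat.one_le_iff_ne_zero.mp hn1
  rw [sinc_eq_real_sinc]
  refine ⟨fun k _ m => fourierCoeff_stepRoot_zpow hn k m, fun k hk m => ?_⟩
  change (fejerCoeff (n / 2) m : ℂ) * _ = _
  rw [fourierCoeff_stepRoot_zpow hn k m]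
  obtain rfl | hmk := eq_or_ne m k
  · have hkn : |(m : ℝ)| ≤ n / 2 := by
      rw [← Int.cast_abs]
      have : (2 * |m| : ℝ) ≤ n := by exact_mod_cast (by omega : 2 * |m| ≤ (n : ℤ))
      linarith
    rw [sub_self, if_pos (dvd_zero _), if_pos rfl, fejerCoeff_of_abs_le hkn]
    push_cast
    ring
  · split_ifs with hdvd
    · rw [fejerCoeff_eq_zero (by positivity) (half_le_abs_of_dvd_sub hk hmk hdvd), ofReal_zero,
        zero_mul]
    · rw [mul_zero]

/-- for even `n` and `|k| < n`, the Fourier expansion of `γ^k` in `L²(𝕋)` is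
`γ^k = Σ_{j∈ℤ} sinc(π(k+jn)/n) z^{k+jn}`, expressed via its Fourier coefficients:
`(γ^k)^(m) = sinc(πm/n)` when `n ∣ m − k` and `0` otherwise.  Consequently, convolution
with the Fejér kernel `F_{n/2}` (multiplication of the `m`-th coefficient by
`(1 − |m|/(n/2))⁺`) gives `F_{n/2} * γ^k = (1 − 2|k|/n) sinc(πk/n) z^k` for `|k| ≤ n/2`,
again expressed via Fourier coefficients. -/
theorem stepRoot_pow_fourierCoeff (n : ℕ) (hn : Even n) (hn1 : 1 ≤ n) :
    (∀ k : ℤ, |k| < (n : ℤ) → ∀ m : ℤ,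
      fourierCoeff (fun x : AddCircle (1 : ℝ) => stepRoot n x ^ k) m =
        if (n : ℤ) ∣ (m - k) then (sinc (Real.pi * m / n) : ℂ) else 0) ∧
    (∀ k : ℤ, |k| ≤ (n : ℤ) / 2 → ∀ m : ℤ,
      ((max 0 (1 - |(m : ℝ)| / ((n : ℝ) / 2)) : ℝ) : ℂ) *
          fourierCoeff (fun x : AddCircle (1 : ℝ) => stepRoot n x ^ k) m =
        if m = k then ((1 - 2 * |(k : ℝ)| / n) * sinc (Real.pi * k / n) : ℂ) else 0) :=
  stepRoot_pow_fourierCoeff_general n hn1
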